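/- If N is an acyclic, forward-backward conflict free Petri net (without self-loops), then the sink marking M_d is reachable from the source marking M₀ by a firing sequence in which every transition of N fires exactly once. -/
import Mathlib


/-- A Petri net: finite sets of places and transitions, with input and output places
for each transition. -/
structure PetriNet where
  P : Type
  T : Type
  [fintypeP : Fintype P]
  [fintypeT : Fintype T]
  [decEqP : DecidableEq P]
  [decEqT : DecidableEq T]
  inp : T → Finset P
  out : T → Finset P

attribute [instance] PetriNet.fintypeP PetriNet.fintypeT PetriNet.decEqP PetriNet.decEqT

namespace PetriNet

variable (N : PetriNet)

/-- No place is both an input and an output of the same transition. -/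
def NoSelfLoops : Prop := ∀ t, Disjoint (N.inp t) (N.out t)

/-- The input transitions of a place: those of which it is an output. -/
def pIn (p : N.P) : Finset N.T := Finset.univ.filter (fun t => p ∈ N.out t)

/-- The output transitions of a place: those of which it is an input. -/
def pOut (p : N.P) : Finset N.T := Finset.univ.filter (fun t => p ∈ N.inp t)

/-- Forward-backward conflict freeness: every place has at most one input and at most
one output transition. -/
def FBCF : Prop := ∀ p : N.P, (N.pIn p).card ≤ 1 ∧ (N.pOut p).card ≤ 1

/-- The arcs of the directed graph of the net, on vertices `P ⊕ T`. -/
def arc : (N.P ⊕ N.T) → (N.P ⊕ N.T) → Prop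
  | .inl p, .inr t => p ∈ N.inp t
  | .inr t, .inl p => p ∈ N.out t
  | _, _ => False

/-- The net is acyclic: its directed graph has no directed cycle. -/
def Acyclic : Prop := ∀ v, ¬ Relation.TransGen N.arc v v

/-- The underlying undirected graph of the net is connected. -/
def WeaklyConnected : Prop :=
  ∀ v w, Relation.ReflTransGen (fun a b => N.arc a b ∨ N.arc b a) v w

def IsSource (p : N.P) : Prop := N.pIn p = ∅
def IsSink (p : N.P) : Prop := N.pOut p = ∅
def IsProperSource (p : N.P) : Prop := N.IsSource p ∧ N.pOut p ≠ ∅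
def IsProperSink (p : N.P) : Prop := N.IsSink p ∧ N.pIn p ≠ ∅

/-- The source marking: one token in every source place, none elsewhere. -/
def M0 : N.P → ℕ := fun p => if N.pIn p = ∅ then 1 else 0

/-- The sink marking: one token in every sink place, none elsewhere. -/
def Md : N.P → ℕ := fun p => if N.pOut p = ∅ then 1 else 0

/-- A transition is enabled when each of its input places holds a token. -/
def Enabled (M : N.P → ℕ) (t : N.T) : Prop := ∀ p ∈ N.inp t, 1 ≤ M p

/-- The marking obtained by firing a transition. -/
def fire (M : N.P → ℕ) (t : N.T) : N.P → ℕ :=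
  fun p => if p ∈ N.inp t then M p - 1 else if p ∈ N.out t then M p + 1 else M p

/-- `FireSeq M ts M'` holds when successively firing the (enabled) transitions of the
list `ts` transforms the marking `M` into `M'`. -/
inductive FireSeq : (N.P → ℕ) → List N.T → (N.P → ℕ) → Prop
  | nil (M : N.P → ℕ) : FireSeq M [] M
  | cons {M M' : N.P → ℕ} (t : N.T) (ts : List N.T) :
      N.Enabled M t → FireSeq (N.fire M t) ts M' → FireSeq M (t :: ts) M'

/-- Reachability of a marking from another by a firing sequence. -/
def Reachable (M₀ M : N.P → ℕ) : Prop := ∃ ts, N.FireSeq M₀ ts M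


/-- The marking after firing exactly the transitions in `S` (for downward-closed `S`). -/
def val (S : Finset N.T) (p : N.P) : ℕ :=
  (if N.pIn p ⊆ S then 1 else 0) - (if (N.pOut p ∩ S).Nonempty then 1 else 0)

/-- `t` must fire before `t'` (there is a place from `t` to `t'`). -/
def rel (t t' : N.T) : Prop := ∃ p, p ∈ N.out t ∧ p ∈ N.inp t'

/-- Downward-closed sets of transitions. -/
def DC (S : Finset N.T) : Prop := ∀ u ∈ S, ∀ t', N.rel t' u → t' ∈ S

lemma mem_pIn {N : PetriNet} {t : N.T} {p : N.P} : t ∈ N.pIn p ↔ p ∈ N.out t := by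
  simp [pIn]

lemma mem_pOut {N : PetriNet} {t : N.T} {p : N.P} : t ∈ N.pOut p ↔ p ∈ N.inp t := by
  simp [pOut]

lemma pIn_eq_singleton {N : PetriNet} (hfbcf : N.FBCF) {t : N.T} {p : N.P}
    (ht : p ∈ N.out t) : N.pIn p = {t} := by
  apply Finset.eq_singleton_iff_unique_mem.2
  refine ⟨mem_pIn.2 ht, fun x hx => ?_⟩
  exact Finset.card_le_one.1 (hfbcf p).1 x hx t (mem_pIn.2 ht)

lemma pOut_eq_singleton {N : PetriNet} (hfbcf : N.FBCF) {t : N.T} {p : N.P}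
    (ht : p ∈ N.inp t) : N.pOut p = {t} := by
  apply Finset.eq_singleton_iff_unique_mem.2
  refine ⟨mem_pOut.2 ht, fun x hx => ?_⟩
  exact Finset.card_le_one.1 (hfbcf p).2 x hx t (mem_pOut.2 ht)

lemma step_lemma {N : PetriNet} (hself : N.NoSelfLoops) (hfbcf : N.FBCF)
    {S : Finset N.T} (hDC : N.DC S) {t : N.T} (htS : t ∉ S)
    (hpred : ∀ t', N.rel t' t → t' ∈ S) :
    N.Enabled (N.val S) t ∧ N.fire (N.val S) t = N.val (insert t S) ∧
      N.DC (insert t S) := by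
  have hin : ∀ p ∈ N.inp t, N.pIn p ⊆ S := by
    intro p hp t' ht'
    exact hpred t' ⟨p, mem_pIn.1 ht', hp⟩
  have hin2 : ∀ p ∈ N.inp t, ¬ (N.pOut p ∩ S).Nonempty := by
    intro p hp h
    rw [pOut_eq_singleton hfbcf hp] at h
    obtain ⟨x, hx⟩ := h
    simp at hx
    exact htS (hx.1 ▸ hx.2)
  refine ⟨?_, ?_, ?_⟩
  · intro p hp
    simp only [val, if_pos (hin p hp), if_neg (hin2 p hp)]
    norm_num
  · funext p
    by_cases hp : p ∈ N.inp t
    · have hpo : p ∉ N.out t := Finset.disjoint_left.1 (hself t) hp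
      simp only [fire, val, if_pos hp]
      rw [if_pos (hin p hp), if_neg (hin2 p hp),
        if_pos ((hin p hp).trans (Finset.subset_insert t S))]
      rw [if_pos ⟨t, Finset.mem_inter.2 ⟨mem_pOut.2 hp, Finset.mem_insert_self t S⟩⟩]
    · by_cases hq : p ∈ N.out t
      · have hpi : N.pIn p = {t} := pIn_eq_singleton hfbcf hq
        have h1 : ¬ N.pIn p ⊆ S := by
          rw [hpi]; intro h; exact htS (h (Finset.mem_singleton_self t))
        have h2 : ¬ (N.pOut p ∩ S).Nonempty := by
          rintro ⟨u, hu⟩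
          simp only [Finset.mem_inter] at hu
          exact htS (hDC u hu.2 t ⟨p, hq, mem_pOut.1 hu.1⟩)
        have h3 : t ∉ N.pOut p := fun h =>
          Finset.disjoint_left.1 (hself t) (mem_pOut.1 h) hq
        simp only [fire, val, if_neg hp, if_pos hq]
        rw [if_neg h1, if_neg h2, if_pos (hpi ▸ Finset.singleton_subset_iff.2
          (Finset.mem_insert_self t S))]
        have : N.pOut p ∩ insert t S = N.pOut p ∩ S := by
          ext u
          simp only [Finset.mem_inter, Finset.mem_insert]
          constructor
          · rintro ⟨hu, rfl | hu2⟩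
            · exact absurd hu h3
            · exact ⟨hu, hu2⟩
          · exact fun ⟨hu, hu2⟩ => ⟨hu, Or.inr hu2⟩
        rw [this, if_neg h2]
      · have h3 : t ∉ N.pIn p := fun h => hq (mem_pIn.1 h)
        have h4 : t ∉ N.pOut p := fun h => hp (mem_pOut.1 h)
        have e1 : (N.pIn p ⊆ insert t S) ↔ (N.pIn p ⊆ S) := by
          constructor
          · intro h x hx
            rcases Finset.mem_insert.1 (h hx) with rfl | h'
            · exact absurd hx h3
            · exact h'
          · exact fun h => h.trans (Finset.subset_insert t S)
        have e2 : N.pOut p ∩ insert t S = N.pOut p ∩ S := by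
          ext u
          simp only [Finset.mem_inter, Finset.mem_insert]
          constructor
          · rintro ⟨hu, rfl | hu2⟩
            · exact absurd hu h4
            · exact ⟨hu, hu2⟩
          · exact fun ⟨hu, hu2⟩ => ⟨hu, Or.inr hu2⟩
        simp only [fire, val, if_neg hp, if_neg hq, e2]
        rw [if_congr e1 rfl rfl]
  · intro u hu t' hrel
    rcases Finset.mem_insert.1 hu with rfl | hu'
    · exact Finset.mem_insert_of_mem (hpred t' hrel)
    · exact Finset.mem_insert_of_mem (hDC u hu' t' hrel)

lemma rel_wf {N : PetriNet} (hacyclic : N.Acyclic) :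
    WellFounded (Relation.TransGen N.rel) := by
  have key : ∀ a b : N.T, Relation.TransGen N.rel a b →
      Relation.TransGen N.arc (Sum.inr a) (Sum.inr b) := by
    intro a b h
    induction h with
    | single h =>
      obtain ⟨p, h1, h2⟩ := h
      exact Relation.TransGen.head (show N.arc (Sum.inr _) (Sum.inl p) from h1)
        (Relation.TransGen.single (show N.arc (Sum.inl p) (Sum.inr _) from h2))
    | tail h1 h2 ih =>
      obtain ⟨p, hp1, hp2⟩ := h2
      exact ih.trans (Relation.TransGen.head
        (show N.arc (Sum.inr _) (Sum.inl p) from hp1)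
        (Relation.TransGen.single (show N.arc (Sum.inl p) (Sum.inr _) from hp2)))
  haveI : IsIrrefl N.T (Relation.TransGen N.rel) :=
    ⟨fun a h => hacyclic (Sum.inr a) (key a a h)⟩
  haveI : IsTrans N.T (Relation.TransGen N.rel) := inferInstance
  exact Finite.wellFounded_of_trans_of_irrefl _

lemma exists_fireseq {N : PetriNet} (hself : N.NoSelfLoops) (hfbcf : N.FBCF)
    (hacyclic : N.Acyclic) :
    ∀ (n : ℕ) (S : Finset N.T), N.DC S → Sᶜ.card = n →
      ∃ ts : List N.T, N.FireSeq (N.val S) ts (N.val Finset.univ) ∧ ts.Nodup ∧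
        ∀ t, t ∈ ts ↔ t ∉ S := by
  intro n
  induction n with
  | zero =>
    intro S _ hcard
    have : Sᶜ = ∅ := Finset.card_eq_zero.1 hcard
    have hS : S = Finset.univ := by
      rwa [Finset.compl_eq_empty_iff] at this
    refine ⟨[], ?_, List.nodup_nil, fun t => ?_⟩
    · rw [hS]; exact FireSeq.nil _
    · simp [hS]
  | succ n ih =>
    intro S hDC hcard
    have hne : (↑Sᶜ : Set N.T).Nonempty := by
      rw [Finset.coe_nonempty]
      exact Finset.card_pos.1 (hcard ▸ Nat.succ_pos n)
    obtain ⟨t, htmem, htmin⟩ := (rel_wf hacyclic).has_min (↑Sᶜ : Set N.T) hne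
    have htS : t ∉ S := by simpa using htmem
    have hpred : ∀ t', N.rel t' t → t' ∈ S := by
      intro t' h
      by_contra h'
      exact htmin t' (by simpa using h') (Relation.TransGen.single h)
    obtain ⟨hen, hfire, hDC'⟩ := step_lemma hself hfbcf hDC htS hpred
    have hcard' : (insert t S)ᶜ.card = n := by
      rw [Finset.compl_insert, Finset.card_erase_of_mem (by simpa using htS), hcard]
      rfl
    obtain ⟨ts, hseq, hnodup, hmem⟩ := ih (insert t S) hDC' hcard'
    refine ⟨t :: ts, ?_, ?_, ?_⟩
    · exact FireSeq.cons t ts hen (hfire ▸ hseq)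
    · refine List.nodup_cons.2 ⟨fun h => ?_, hnodup⟩
      exact (hmem t).1 h (Finset.mem_insert_self t S)
    · intro u
      simp only [List.mem_cons, hmem u, Finset.mem_insert]
      constructor
      · rintro (rfl | h)
        · exact htS
        · exact fun hu => h (Or.inr hu)
      · intro h
        by_cases hu : u = t
        · exact Or.inl hu
        · exact Or.inr (fun h' => h (h'.resolve_left hu))

/-- If `N` is an acyclic, forward-backward conflict free Petri net
(without self-loops), then the sink marking `Md` is reachable from the source marking
`M0` by a firing sequence in which every transition of `N` fires exactly once. -/
theorem acyclic_FBCF_sink_reachable_from_source (N : PetriNet)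
    (hself : N.NoSelfLoops) (hfbcf : N.FBCF) (hacyclic : N.Acyclic) :
    ∃ ts : List N.T, N.FireSeq N.M0 ts N.Md ∧ ts.Nodup ∧ ∀ t : N.T, t ∈ ts := by
  have hM0 : N.M0 = N.val ∅ := by
    funext p
    simp only [M0, val, Finset.subset_empty, Finset.inter_empty,
      Finset.not_nonempty_empty, if_false, Nat.sub_zero]
  have hMd : N.Md = N.val Finset.univ := by
    funext p
    simp only [Md, val, Finset.subset_univ, if_true, Finset.inter_univ]
    by_cases h : N.pOut p = ∅
    · simp [h]
    · simp [h, Finset.nonempty_iff_ne_empty]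
  have hDC : N.DC ∅ := fun u hu => absurd hu (Finset.notMem_empty u)
  obtain ⟨ts, hseq, hnodup, hmem⟩ :=
    exists_fireseq hself hfbcf hacyclic (∅ᶜ : Finset N.T).card ∅ hDC rfl
  refine ⟨ts, ?_, hnodup, fun t => (hmem t).2 (Finset.notMem_empty t)⟩
  rw [hM0, hMd]
  exact hseq
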